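/- Let $n \ge 5$ and let $G$ be the graph on vertices $\{x_1,\dots,x_n, x_{1'},\dots,x_{n'}\}$ formed by the disjoint union of two $n$-cycles $C_n$ (on the $x_i$) and $C_n'$ (on the $x_{i'}$) together with all edges $\{x_i, x_{j'}\}$ with $i \ne j$. Then the vertex connectivity of $G$ is $n+1$. -/
import Mathlib


/-- The vertex connectivity of a finite simple graph: the least `k` such that removing some
set of `k` vertices disconnects the graph or leaves at most one vertex
(so that `κ(Kₙ) = n - 1`). -/
noncomputable def vertexConnectivity {V : Type*} [Fintype V] (G : SimpleGraph V) : ℕ :=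
  sInf {k | ∃ W : Finset V, W.card = k ∧
    (¬ (G.induce ((W : Set V)ᶜ)).Preconnected ∨ Fintype.card V ≤ k + 1)}

/-- The graph on two disjoint `n`-cycles `C_n` (on the `x_i`) and `C_n'` (on the `x_{i'}`)
together with all edges `{x_i, x_{j'}}` with `i ≠ j`. -/
def twoCyclesJoined (n : ℕ) : SimpleGraph (Fin n ⊕ Fin n) :=
  SimpleGraph.fromRel (fun a b =>
    match a, b with
    | Sum.inl i, Sum.inl j => j.val = (i.val + 1) % n
    | Sum.inr i, Sum.inr j => j.val = (i.val + 1) % n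
    | Sum.inl i, Sum.inr j => i.val ≠ j.val
    | Sum.inr _, Sum.inl _ => False)

namespace TCJ
open SimpleGraph Sum
variable {n : ℕ}

lemma cycle_ne (hn : 2 ≤ n) {i j : Fin n} (h : j.val = (i.val + 1) % n) : i ≠ j := by
  intro he; subst he
  have hi := i.isLt
  rcases Nat.lt_or_ge (i.val + 1) n with h' | h'
  · rw [Nat.mod_eq_of_lt h'] at h; omega
  · have h2 : i.val + 1 = n := by omega
    rw [h2, Nat.mod_self] at h; omega

lemma adjLR {i j : Fin n} (h : i ≠ j) : (twoCyclesJoined n).Adj (.inl i) (.inr j) := by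
  rw [twoCyclesJoined, SimpleGraph.fromRel_adj]
  exact ⟨by simp, Or.inl (fun hv => h (Fin.ext hv))⟩

lemma adjL (hn : 2 ≤ n) {i j : Fin n} (h : j.val = (i.val + 1) % n) :
    (twoCyclesJoined n).Adj (.inl i) (.inl j) := by
  rw [twoCyclesJoined, SimpleGraph.fromRel_adj]
  exact ⟨fun he => cycle_ne hn h (by injection he), Or.inl h⟩

lemma adjR (hn : 2 ≤ n) {i j : Fin n} (h : j.val = (i.val + 1) % n) :
    (twoCyclesJoined n).Adj (.inr i) (.inr j) := by
  rw [twoCyclesJoined, SimpleGraph.fromRel_adj]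
  exact ⟨fun he => cycle_ne hn h (by injection he), Or.inl h⟩


section W
variable (W : Finset (Fin n ⊕ Fin n))

abbrev H : SimpleGraph ((↑W : Set (Fin n ⊕ Fin n))ᶜ : Set (Fin n ⊕ Fin n)) :=
  (twoCyclesJoined n).induce ((↑W : Set (Fin n ⊕ Fin n))ᶜ)

lemma reach_of_adj {u v : Fin n ⊕ Fin n} (hu : u ∈ (↑W : Set (Fin n ⊕ Fin n))ᶜ)
    (hv : v ∈ (↑W : Set (Fin n ⊕ Fin n))ᶜ) (h : (twoCyclesJoined n).Adj u v) :
    (H W).Reachable ⟨u, hu⟩ ⟨v, hv⟩ :=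
  SimpleGraph.Adj.reachable h



lemma reach_inr_zero (hn : 5 ≤ n) (hB : ∀ j : Fin n, (Sum.inr j : Fin n ⊕ Fin n) ∉ W) :
    ∀ m, (hm : m < n) → (H W).Reachable
      ⟨.inr ⟨0, by omega⟩, by simpa using hB _⟩ ⟨.inr ⟨m, hm⟩, by simpa using hB _⟩ := by
  intro m
  induction m with
  | zero => intro hm; exact Reachable.refl _
  | succ k ih =>
      intro hm
      have hk : k < n := by omega
      exact (ih hk).trans (reach_of_adj W (by simpa using hB _) (by simpa using hB _)
        (adjR (by omega) (by simp [Nat.mod_eq_of_lt hm])))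

lemma reach_inr_all (hn : 5 ≤ n) (hB : ∀ j : Fin n, (Sum.inr j : Fin n ⊕ Fin n) ∉ W)
    (i j : Fin n) :
    (H W).Reachable ⟨.inr i, by simpa using hB _⟩ ⟨.inr j, by simpa using hB _⟩ := by
  have h1 := reach_inr_zero W hn hB i.val i.isLt
  have h2 := reach_inr_zero W hn hB j.val j.isLt
  exact h1.symm.trans h2

lemma reach_inl_zero (hn : 5 ≤ n) (hA : ∀ j : Fin n, (Sum.inl j : Fin n ⊕ Fin n) ∉ W) :
    ∀ m, (hm : m < n) → (H W).Reachable
      ⟨.inl ⟨0, by omega⟩, by simpa using hA _⟩ ⟨.inl ⟨m, hm⟩, by simpa using hA _⟩ := by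
  intro m
  induction m with
  | zero => intro hm; exact Reachable.refl _
  | succ k ih =>
      intro hm
      have hk : k < n := by omega
      exact (ih hk).trans (reach_of_adj W (by simpa using hA _) (by simpa using hA _)
        (adjL (by omega) (by simp [Nat.mod_eq_of_lt hm])))

lemma reach_inl_all (hn : 5 ≤ n) (hA : ∀ j : Fin n, (Sum.inl j : Fin n ⊕ Fin n) ∉ W)
    (i j : Fin n) :
    (H W).Reachable ⟨.inl i, by simpa using hA _⟩ ⟨.inl j, by simpa using hA _⟩ :=
  ((reach_inl_zero W hn hA i.val i.isLt).symm.trans (reach_inl_zero W hn hA j.val j.isLt))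

lemma reachLR (A B : Finset (Fin n))
    (hA : ∀ i, i ∈ A ↔ (Sum.inl i : Fin n ⊕ Fin n) ∉ W)
    (hB : ∀ j, j ∈ B ↔ (Sum.inr j : Fin n ⊕ Fin n) ∉ W)
    (ha : 2 ≤ A.card) (hb : 2 ≤ B.card) (hab : 5 ≤ A.card + B.card)
    {i j : Fin n} (hi : i ∈ A) (hj : j ∈ B) :
    (H W).Reachable ⟨.inl i, by simpa using (hA i).mp hi⟩ ⟨.inr j, by simpa using (hB j).mp hj⟩ := by
  by_cases hij : i ≠ j
  · exact reach_of_adj W _ _ (adjLR hij)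
  · push_neg at hij; subst hij
    obtain ⟨j', hj', hj'i⟩ := Finset.exists_mem_ne (s := B) (by omega) i
    · obtain ⟨i', hi', hi'i⟩ := Finset.exists_mem_ne (show 1 < A.card by omega) i
      by_cases hij' : i' = j'
      · -- need third element on one side
        rcases le_or_gt 3 A.card with h3 | h3
        · -- get i'' ∈ A, i'' ≠ i, i'' ≠ i'
          obtain ⟨i'', hi''⟩ := Finset.exists_mem_ne
            (s := A.erase i) (by rw [Finset.card_erase_of_mem hi]; omega) i'
          obtain ⟨hi''e, hi''i'⟩ := hi''
          have hi''A : i'' ∈ A := Finset.mem_of_mem_erase hi''e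
          have hi''i : i'' ≠ i := Finset.ne_of_mem_erase hi''e
          refine (reach_of_adj W (by simpa using (hA i).mp hi) (by simpa using (hB j').mp hj')
              (adjLR (fun h => hj'i h.symm))).trans ?_
          refine ((reach_of_adj W (by simpa using (hA i'').mp hi''A) (by simpa using (hB j').mp hj')
              (adjLR (by rw [← hij']; exact hi''i'))).symm).trans ?_
          exact reach_of_adj W _ _ (adjLR hi''i)
        · have h3b : 3 ≤ B.card := by omega
          obtain ⟨j'', hj''⟩ := Finset.exists_mem_ne
            (s := B.erase i) (by rw [Finset.card_erase_of_mem hj]; omega) j'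
          obtain ⟨hj''e, hj''j'⟩ := hj''
          have hj''B : j'' ∈ B := Finset.mem_of_mem_erase hj''e
          have hj''i : j'' ≠ i := Finset.ne_of_mem_erase hj''e
          refine (reach_of_adj W (by simpa using (hA i).mp hi) (by simpa using (hB j'').mp hj''B)
              (adjLR (fun h => hj''i h.symm))).trans ?_
          refine ((reach_of_adj W (by simpa using (hA i').mp hi') (by simpa using (hB j'').mp hj''B)
              (adjLR (by rw [hij']; exact fun h => hj''j' h.symm))).symm).trans ?_
          exact reach_of_adj W _ _ (adjLR hi'i)
      · refine (reach_of_adj W (by simpa using (hA i).mp hi) (by simpa using (hB j').mp hj')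
            (adjLR (fun h => hj'i h.symm))).trans ?_
        refine ((reach_of_adj W (by simpa using (hA i').mp hi') (by simpa using (hB j').mp hj')
            (adjLR hij')).symm).trans ?_
        exact reach_of_adj W _ _ (adjLR hi'i)

-- nat facts
lemma succ_mod_ne (hn : 2 ≤ n) {v : ℕ} (hv : v < n) : (v + 1) % n ≠ v := by
  rcases Nat.lt_or_ge (v + 1) n with h | h
  · rw [Nat.mod_eq_of_lt h]; omega
  · have : v + 1 = n := by omega
    rw [this, Nat.mod_self]; omega

lemma pred_mod (hn : 2 ≤ n) {v : ℕ} (hv : v < n) :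
    (v + n - 1) % n = if v = 0 then n - 1 else v - 1 := by
  rcases Nat.eq_zero_or_pos v with h | h
  · subst h; simp [Nat.mod_eq_of_lt (show n - 1 < n by omega)]
  · have he : v + n - 1 = (v - 1) + n := by omega
    rw [he, Nat.add_mod_right, Nat.mod_eq_of_lt (by omega), if_neg (by omega)]

-- hub lemma, A side singleton
lemma hub_a1 (hn : 5 ≤ n) (B : Finset (Fin n))
    (hB : ∀ j, j ∈ B ↔ (Sum.inr j : Fin n ⊕ Fin n) ∉ W)
    (hb : n - 1 ≤ B.card) {i0 : Fin n} (hi0 : (Sum.inl i0 : Fin n ⊕ Fin n) ∉ W)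
    {j : Fin n} (hj : j ∈ B) :
    (H W).Reachable ⟨.inr j, by simpa using (hB j).mp hj⟩ ⟨.inl i0, by simpa using hi0⟩ := by
  classical
  by_cases hji : j = i0
  · subst hji
    set v := j.val with hv
    have hvn := j.isLt
    set c1 : Fin n := ⟨(v + 1) % n, Nat.mod_lt _ (by omega)⟩ with hc1
    set c2 : Fin n := ⟨(v + n - 1) % n, Nat.mod_lt _ (by omega)⟩ with hc2
    have hc12 : c1 ≠ c2 := by
      have h2 := pred_mod (n := n) (by omega) hvn
      intro he
      have := congrArg Fin.val he
      simp only [hc1, hc2] at this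
      rw [h2] at this
      rcases Nat.lt_or_ge (v + 1) n with h | h
      · rw [Nat.mod_eq_of_lt h] at this; split_ifs at this <;> omega
      · have hvv : v + 1 = n := by omega
        rw [hvv, Nat.mod_self] at this; split_ifs at this <;> omega
    have hc1j : c1 ≠ j := by
      intro he; exact succ_mod_ne (by omega) hvn (congrArg Fin.val he)
    have hc2j : c2 ≠ j := by
      intro he
      have := congrArg Fin.val he
      simp only [hc2] at this
      rw [pred_mod (by omega) hvn] at this
      split_ifs at this <;> omega
    have hmem : c1 ∈ B ∨ c2 ∈ B := by
      by_contra hcon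
      push_neg at hcon
      have hsub : ({c1, c2} : Finset (Fin n)) ⊆ Bᶜ := by
        intro x hx
        simp only [Finset.mem_insert, Finset.mem_singleton] at hx
        rcases hx with rfl | rfl <;> simp [Finset.mem_compl, hcon.1, hcon.2]
      have := Finset.card_le_card hsub
      rw [Finset.card_pair hc12, Finset.card_compl] at this
      simp only [Fintype.card_fin] at this
      omega
    rcases hmem with hc | hc
    · refine (reach_of_adj W (by simpa using (hB j).mp hj) (by simpa using (hB c1).mp hc)
        (adjR (by omega) rfl)).trans ?_
      exact reach_of_adj W _ _ ((adjLR (fun h => hc1j h.symm)).symm)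
    · have hadj : (twoCyclesJoined n).Adj (.inr c2) (.inr j) := by
        refine adjR (by omega) ?_
        show v = (((v + n - 1) % n) + 1) % n
        rw [Nat.mod_add_mod, show v + n - 1 + 1 = v + n by omega, Nat.add_mod_right,
          Nat.mod_eq_of_lt hvn]
      refine ((reach_of_adj W (by simpa using (hB c2).mp hc) (by simpa using (hB j).mp hj)
        hadj).symm).trans ?_
      exact reach_of_adj W _ _ ((adjLR (fun h => hc2j h.symm)).symm)
  · exact reach_of_adj W _ _ ((adjLR (Ne.symm hji)).symm)

-- hub lemma, B side singleton
lemma hub_b1 (hn : 5 ≤ n) (A : Finset (Fin n))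
    (hA : ∀ i, i ∈ A ↔ (Sum.inl i : Fin n ⊕ Fin n) ∉ W)
    (ha : n - 1 ≤ A.card) {j0 : Fin n} (hj0 : (Sum.inr j0 : Fin n ⊕ Fin n) ∉ W)
    {i : Fin n} (hi : i ∈ A) :
    (H W).Reachable ⟨.inl i, by simpa using (hA i).mp hi⟩ ⟨.inr j0, by simpa using hj0⟩ := by
  classical
  by_cases hji : i = j0
  · subst hji
    set v := i.val with hv
    have hvn := i.isLt
    set c1 : Fin n := ⟨(v + 1) % n, Nat.mod_lt _ (by omega)⟩ with hc1
    set c2 : Fin n := ⟨(v + n - 1) % n, Nat.mod_lt _ (by omega)⟩ with hc2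
    have hc12 : c1 ≠ c2 := by
      have h2 := pred_mod (n := n) (by omega) hvn
      intro he
      have := congrArg Fin.val he
      simp only [hc1, hc2] at this
      rw [h2] at this
      rcases Nat.lt_or_ge (v + 1) n with h | h
      · rw [Nat.mod_eq_of_lt h] at this; split_ifs at this <;> omega
      · have hvv : v + 1 = n := by omega
        rw [hvv, Nat.mod_self] at this; split_ifs at this <;> omega
    have hc1j : c1 ≠ i := by
      intro he; exact succ_mod_ne (by omega) hvn (congrArg Fin.val he)
    have hc2j : c2 ≠ i := by
      intro he
      have := congrArg Fin.val he
      simp only [hc2] at this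
      rw [pred_mod (by omega) hvn] at this
      split_ifs at this <;> omega
    have hmem : c1 ∈ A ∨ c2 ∈ A := by
      by_contra hcon
      push_neg at hcon
      have hsub : ({c1, c2} : Finset (Fin n)) ⊆ Aᶜ := by
        intro x hx
        simp only [Finset.mem_insert, Finset.mem_singleton] at hx
        rcases hx with rfl | rfl <;> simp [Finset.mem_compl, hcon.1, hcon.2]
      have := Finset.card_le_card hsub
      rw [Finset.card_pair hc12, Finset.card_compl] at this
      simp only [Fintype.card_fin] at this
      omega
    rcases hmem with hc | hc
    · refine (reach_of_adj W (by simpa using (hA i).mp hi) (by simpa using (hA c1).mp hc)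
        (adjL (by omega) rfl)).trans ?_
      exact reach_of_adj W _ _ (adjLR hc1j)
    · have hadj : (twoCyclesJoined n).Adj (.inl c2) (.inl i) := by
        refine adjL (by omega) ?_
        show v = (((v + n - 1) % n) + 1) % n
        rw [Nat.mod_add_mod, show v + n - 1 + 1 = v + n by omega, Nat.add_mod_right,
          Nat.mod_eq_of_lt hvn]
      refine ((reach_of_adj W (by simpa using (hA c2).mp hc) (by simpa using (hA i).mp hi)
        hadj).symm).trans ?_
      exact reach_of_adj W _ _ (adjLR hc2j)
  · exact reach_of_adj W _ _ (adjLR hji)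

lemma lower (hn : 5 ≤ n) (hW : W.card ≤ n) : (H W).Preconnected := by
  classical
  set A : Finset (Fin n) := Finset.univ.filter
    (fun i => (Sum.inl i : Fin n ⊕ Fin n) ∉ W) with hAdef
  set B : Finset (Fin n) := Finset.univ.filter
    (fun i => (Sum.inr i : Fin n ⊕ Fin n) ∉ W) with hBdef
  have hA : ∀ i, i ∈ A ↔ (Sum.inl i : Fin n ⊕ Fin n) ∉ W := by
    intro i; simp [hAdef]
  have hB : ∀ j, j ∈ B ↔ (Sum.inr j : Fin n ⊕ Fin n) ∉ W := by
    intro j; simp [hBdef]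
  -- counting
  have hcount : n ≤ A.card + B.card := by
    have hcompl : Wᶜ = A.map ⟨Sum.inl, Sum.inl_injective⟩ ∪ B.map ⟨Sum.inr, Sum.inr_injective⟩ := by
      ext x
      rcases x with i | i <;>
        simp [hA, hB, Finset.mem_compl]
    have hdisj : Disjoint (A.map ⟨Sum.inl, Sum.inl_injective⟩)
        (B.map ⟨Sum.inr, Sum.inr_injective⟩) := by
      rw [Finset.disjoint_left]
      rintro x hx hy
      simp only [Finset.mem_map, Function.Embedding.coeFn_mk] at hx hy
      obtain ⟨i, _, rfl⟩ := hx
      obtain ⟨j, _, h⟩ := hy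
      exact absurd h (by simp)
    have h1 : Wᶜ.card = A.card + B.card := by
      rw [hcompl, Finset.card_union_of_disjoint hdisj, Finset.card_map, Finset.card_map]
    have h2 : Wᶜ.card = (n + n) - W.card := by
      rw [Finset.card_compl]
      simp
    omega
  intro x y
  -- helper: reach to ... case analysis
  by_cases hA0 : A.card = 0
  · -- all vertices are inr, B = univ
    have hBall : ∀ j : Fin n, (Sum.inr j : Fin n ⊕ Fin n) ∉ W := by
      have hle : B.card ≤ n := by simpa using Finset.card_le_univ B
      have : B = Finset.univ := Finset.eq_univ_of_card _ (by simp; omega)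
      intro j
      exact (hB j).mp (by rw [this]; exact Finset.mem_univ j)
    have hAe : A = ∅ := Finset.card_eq_zero.mp hA0
    obtain ⟨(i | i), hx⟩ := x
    · exact absurd ((hA i).mpr (by simpa using hx)) (by simp [hAe])
    obtain ⟨(j | j), hy⟩ := y
    · exact absurd ((hA j).mpr (by simpa using hy)) (by simp [hAe])
    exact reach_inr_all W hn hBall i j
  · by_cases hB0 : B.card = 0
    · have hAall : ∀ j : Fin n, (Sum.inl j : Fin n ⊕ Fin n) ∉ W := by
        have hle : A.card ≤ n := by simpa using Finset.card_le_univ A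
        have : A = Finset.univ := Finset.eq_univ_of_card _ (by simp; omega)
        intro j
        exact (hA j).mp (by rw [this]; exact Finset.mem_univ j)
      have hBe : B = ∅ := Finset.card_eq_zero.mp hB0
      obtain ⟨(i | i), hx⟩ := x
      swap
      · exact absurd ((hB i).mpr (by simpa using hx)) (by simp [hBe])
      obtain ⟨(j | j), hy⟩ := y
      swap
      · exact absurd ((hB j).mpr (by simpa using hy)) (by simp [hBe])
      exact reach_inl_all W hn hAall i j
    · by_cases hA1 : A.card = 1
      · -- hub at the unique element of A
        obtain ⟨i0, hi0A⟩ := Finset.card_eq_one.mp hA1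
        have hi0 : (Sum.inl i0 : Fin n ⊕ Fin n) ∉ W := (hA i0).mp (by simp [hi0A])
        have hbcard : n - 1 ≤ B.card := by omega
        have key : ∀ z : ((↑W : Set (Fin n ⊕ Fin n))ᶜ : Set (Fin n ⊕ Fin n)),
            (H W).Reachable z ⟨.inl i0, by simpa using hi0⟩ := by
          rintro ⟨(i | j), hz⟩
          · have : i = i0 := by
              have hiA : i ∈ A := (hA i).mpr (by simpa using hz)
              rw [hi0A] at hiA; simpa using hiA
            subst this
            exact Reachable.refl _
          · exact hub_a1 W hn B hB hbcard hi0 ((hB j).mpr (by simpa using hz))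
        exact (key x).trans (key y).symm
      · by_cases hB1 : B.card = 1
        · obtain ⟨j0, hj0B⟩ := Finset.card_eq_one.mp hB1
          have hj0 : (Sum.inr j0 : Fin n ⊕ Fin n) ∉ W := (hB j0).mp (by simp [hj0B])
          have hacard : n - 1 ≤ A.card := by omega
          have key : ∀ z : ((↑W : Set (Fin n ⊕ Fin n))ᶜ : Set (Fin n ⊕ Fin n)),
              (H W).Reachable z ⟨.inr j0, by simpa using hj0⟩ := by
            rintro ⟨(i | j), hz⟩
            · exact hub_b1 W hn A hA hacard hj0 ((hA i).mpr (by simpa using hz))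
            · have : j = j0 := by
                have hjB : j ∈ B := (hB j).mpr (by simpa using hz)
                rw [hj0B] at hjB; simpa using hjB
              subst this
              exact Reachable.refl _
          exact (key x).trans (key y).symm
        · -- a ≥ 2, b ≥ 2
          have ha2 : 2 ≤ A.card := by omega
          have hb2 : 2 ≤ B.card := by omega
          have hab : 5 ≤ A.card + B.card := by omega
          obtain ⟨(i | i), hx⟩ := x <;> obtain ⟨(j | j), hy⟩ := y
          · obtain ⟨k, hk⟩ := Finset.card_pos.mp (by omega : 0 < B.card)
            exact (reachLR W A B hA hB ha2 hb2 hab ((hA i).mpr (by simpa using hx)) hk).trans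
              (reachLR W A B hA hB ha2 hb2 hab ((hA j).mpr (by simpa using hy)) hk).symm
          · exact reachLR W A B hA hB ha2 hb2 hab ((hA i).mpr (by simpa using hx))
              ((hB j).mpr (by simpa using hy))
          · exact (reachLR W A B hA hB ha2 hb2 hab ((hA j).mpr (by simpa using hy))
              ((hB i).mpr (by simpa using hx))).symm
          · obtain ⟨k, hk⟩ := Finset.card_pos.mp (by omega : 0 < A.card)
            exact (reachLR W A B hA hB ha2 hb2 hab hk ((hB i).mpr (by simpa using hx))).symm.trans
              (reachLR W A B hA hB ha2 hb2 hab hk ((hB j).mpr (by simpa using hy)))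

end W


lemma upper_mem (hn : 5 ≤ n) :
    ∃ W : Finset (Fin n ⊕ Fin n), W.card = n + 1 ∧
      (¬ ((twoCyclesJoined n).induce ((↑W : Set (Fin n ⊕ Fin n))ᶜ)).Preconnected ∨
        Fintype.card (Fin n ⊕ Fin n) ≤ (n + 1) + 1) := by
  classical
  have h1 : (1 : ℕ) < n := by omega
  have h2 : n - 1 < n := by omega
  have h0 : (0 : ℕ) < n := by omega
  set W : Finset (Fin n ⊕ Fin n) :=
    insert (Sum.inl ⟨1, h1⟩) (insert (Sum.inl ⟨n - 1, h2⟩)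
      ((Finset.univ.erase (⟨0, h0⟩ : Fin n)).image Sum.inr)) with hWdef
  refine ⟨W, ?_, Or.inl ?_⟩
  · have hcard_img : ((Finset.univ.erase (⟨0, h0⟩ : Fin n)).image
        (Sum.inr : Fin n → Fin n ⊕ Fin n)).card = n - 1 := by
      rw [Finset.card_image_of_injective _ Sum.inr_injective,
        Finset.card_erase_of_mem (Finset.mem_univ _)]
      simp
    rw [hWdef, Finset.card_insert_of_notMem, Finset.card_insert_of_notMem, hcard_img]
    · omega
    · simp
    · simp only [Finset.mem_insert, Finset.mem_image]
      push_neg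
      constructor
      · intro he
        have := congrArg Sum.getLeft? he
        simp at this
        omega
      · intro x _ he
        exact absurd he (by simp)
  · intro hpre
    have hu : (Sum.inl ⟨0, h0⟩ : Fin n ⊕ Fin n) ∈ (↑W : Set (Fin n ⊕ Fin n))ᶜ := by
      simp only [Set.mem_compl_iff, Finset.coe_insert, Set.mem_insert_iff, hWdef,
        Finset.coe_image, Set.mem_image, Finset.mem_coe]
      push_neg
      refine ⟨?_, ?_, ?_⟩
      · intro he; have := congrArg Sum.getLeft? he; simp at this
      · intro he; have := congrArg Sum.getLeft? he; simp at this; omega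
      · intro x _ he; exact absurd he (by simp)
    have hv : (Sum.inr ⟨0, h0⟩ : Fin n ⊕ Fin n) ∈ (↑W : Set (Fin n ⊕ Fin n))ᶜ := by
      simp only [Set.mem_compl_iff, Finset.coe_insert, Set.mem_insert_iff, hWdef,
        Finset.coe_image, Set.mem_image, Finset.mem_coe]
      push_neg
      refine ⟨by simp, by simp, ?_⟩
      intro x hx he
      have : x = ⟨0, h0⟩ := by
        have := congrArg Sum.getRight? he; simpa using this
      subst this
      exact absurd hx (by simp)
    obtain ⟨p⟩ := hpre ⟨Sum.inl ⟨0, h0⟩, hu⟩ ⟨Sum.inr ⟨0, h0⟩, hv⟩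
    cases p with
    | @cons _ w _ hadj p' =>
        -- hadj : H.Adj ⟨inl 0,_⟩ w ; so G.Adj (inl 0) w.val and w.val ∉ W
        have hGadj : (twoCyclesJoined n).Adj (Sum.inl ⟨0, h0⟩) w.val := hadj
        have hwmem : w.val ∉ W := by
          have := w.property
          simp only [Set.mem_compl_iff, Finset.mem_coe] at this
          exact this
        rw [twoCyclesJoined, SimpleGraph.fromRel_adj] at hGadj
        obtain ⟨hne, hcond⟩ := hGadj
        apply hwmem
        rcases hw : w.val with i | i
        · rw [hw] at hcond
          simp only at hcond
          have : i.val = 1 % n ∨ (0 : ℕ) = (i.val + 1) % n := hcond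
          rcases this with h | h
        -- i = 1 or i = n-1
          · have : i = ⟨1, h1⟩ := by
              apply Fin.ext
              simpa [Nat.mod_eq_of_lt h1] using h
            rw [hWdef]; subst this; simp
          · have hdvd : n ∣ i.val + 1 := Nat.dvd_of_mod_eq_zero h.symm
            have hle : n ≤ i.val + 1 := Nat.le_of_dvd (by omega) hdvd
            have : i = ⟨n - 1, h2⟩ := by
              apply Fin.ext
              have := i.isLt
              simp only
              omega
            rw [hWdef]; subst this; simp
        · rw [hw] at hcond
          simp only at hcond
          have hiv : (0 : ℕ) ≠ i.val := by
            rcases hcond with h | h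
            · exact h
            · exact absurd h (by simp)
          rw [hWdef]
          simp only [Finset.mem_insert, Finset.mem_image]
          refine Or.inr (Or.inr ⟨i, ?_, rfl⟩)
          rw [Finset.mem_erase]
          exact ⟨fun he => hiv (by rw [he]), Finset.mem_univ _⟩


end TCJ

theorem vertexConnectivity_twoCyclesJoined (n : ℕ) (hn : 5 ≤ n) :
    vertexConnectivity (twoCyclesJoined n) = n + 1 := by
  classical
  obtain ⟨W0, hW0card, hW0⟩ := TCJ.upper_mem hn
  have hmem : n + 1 ∈ {k | ∃ W : Finset (Fin n ⊕ Fin n), W.card = k ∧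
      (¬ ((twoCyclesJoined n).induce ((W : Set (Fin n ⊕ Fin n))ᶜ)).Preconnected ∨
        Fintype.card (Fin n ⊕ Fin n) ≤ k + 1)} := ⟨W0, hW0card, hW0⟩
  refine le_antisymm (Nat.sInf_le hmem) (le_csInf ⟨_, hmem⟩ ?_)
  rintro k ⟨W, hWcard, hk⟩
  by_contra hlt
  push_neg at hlt
  have hWn : W.card ≤ n := by omega
  rcases hk with hk | hk
  · exact hk (TCJ.lower W hn hWn)
  · simp only [Fintype.card_sum, Fintype.card_fin] at hk
    omega
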